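/- Let A ∈ ℝ^{n×n}, C ∈ ℝ^{1×n}, and h > 0. Define the 2n×2n block matrix M := [[Aᵀ, CᵀC],[0, −A]], and write its exponential as exp(Mh) = [[F₁₁, F₁₂],[0, F₂₂]]. Then F₂₂ = e^{−Ah} and F₂₂ᵀ F₁₂ = ∫₀^h e^{−Aᵀτ} Cᵀ C e^{−Aτ} dτ. -/

import Mathlib

/-!
Powers of a block upper-triangular matrix `N = [[P, Q], [0, R]]` are again block upper-triangular
with diagonal blocks `P ^ k` and `R ^ k`, so summing the exponential series gives
`exp (t • N) = [[exp (t • P), F t], [0, exp (t • R)]]`. Differentiating `exp (t • N)` shows that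
`F' = P * F + Q * exp (t • R)`, hence `(exp (-t • P) * F t)' = exp (-t • P) * Q * exp (t • R)`,
and the fundamental theorem of calculus with `F 0 = 0` yields the integral. For `P = Aᵀ` one has
`exp (h • -Aᵀ) = (exp (h • -A))ᵀ`.
-/

open Matrix NormedSpace
open scoped Nat

namespace Matrix

variable {m l α : Type*}

theorem submatrix_tsum {ι m' l' : Type*} [AddCommMonoid α] [TopologicalSpace α] [T2Space α]
    {f : ι → Matrix m l α} (hf : Summable f) (r : m' → m) (c : l' → l) :
    (∑' k, f k).submatrix r c = ∑' k, (f k).submatrix r c :=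
  hf.map_tsum ({ toFun := (submatrix · r c), map_zero' := rfl, map_add' := fun _ _ => rfl } :
    Matrix m l α →+ Matrix m' l' α) (continuous_id.matrix_submatrix r c)

variable [Fintype m] [DecidableEq m]

theorem fromBlocks_zero₂₁_pow [Fintype l] [DecidableEq l] [Ring α]
    (P : Matrix m m α) (Q : Matrix m l α) (R : Matrix l l α) (k : ℕ) :
    ∃ X, fromBlocks P Q 0 R ^ k = fromBlocks (P ^ k) X 0 (R ^ k) := by
  induction k with
  | zero => exact ⟨0, by simp only [pow_zero, fromBlocks_one]⟩
  | succ k ih =>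
    obtain ⟨X, hX⟩ := ih
    exact ⟨P ^ k * Q + X * R, by simp [pow_succ, hX, fromBlocks_multiply]⟩

section RCLike

variable {𝕂 : Type*} [RCLike 𝕂]

open scoped Matrix.Norms.Operator in
theorem summable_expSeries (A : Matrix m m 𝕂) :
    Summable fun k : ℕ => (k !⁻¹ : 𝕂) • A ^ k :=
  expSeries_summable' A

theorem exp_fromBlocks_zero₂₁ [Fintype l] [DecidableEq l]
    (P : Matrix m m 𝕂) (Q : Matrix m l 𝕂) (R : Matrix l l 𝕂) :
    exp (fromBlocks P Q 0 R) =
      fromBlocks (exp P) (exp (fromBlocks P Q 0 R)).toBlocks₁₂ 0 (exp R) := by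
  have hsum := summable_expSeries (fromBlocks P Q 0 R)
  conv_lhs => rw [← fromBlocks_toBlocks (exp (fromBlocks P Q 0 R))]
  congr 1
  · change (exp (fromBlocks P Q 0 R)).submatrix Sum.inl Sum.inl = _
    rw [exp_eq_tsum 𝕂, exp_eq_tsum 𝕂, submatrix_tsum hsum]
    congr! 2 with k
    obtain ⟨X, hX⟩ := fromBlocks_zero₂₁_pow P Q R k
    rw [hX]
    rfl
  · ext i j
    apply (upper_two_blockTriangular P Q R Nat.zero_lt_one).exp
    simp
  · change (exp (fromBlocks P Q 0 R)).submatrix Sum.inr Sum.inr = _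
    rw [exp_eq_tsum 𝕂, exp_eq_tsum 𝕂, submatrix_tsum hsum]
    congr! 2 with k
    obtain ⟨X, hX⟩ := fromBlocks_zero₂₁_pow P Q R k
    rw [hX]
    rfl

end RCLike

section VanLoan

open scoped Matrix.Norms.Operator

theorem hasDerivAt_exp_neg_mul_toBlocks₁₂_exp (P Q R : Matrix m m ℝ) (t : ℝ) :
    HasDerivAt (fun s : ℝ => exp (s • -P) * (exp (s • fromBlocks P Q 0 R)).toBlocks₁₂)
      (exp (t • -P) * Q * exp (t • R)) t := by
  set N := fromBlocks P Q 0 R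
  let π : Matrix (m ⊕ m) (m ⊕ m) ℝ →L[ℝ] Matrix m m ℝ := LinearMap.toContinuousLinearMap
    { toFun := toBlocks₁₂, map_add' := fun _ _ => rfl, map_smul' := fun _ _ => rfl }
  have hN : (N * exp (t • N)).toBlocks₁₂ = P * (exp (t • N)).toBlocks₁₂ + Q * exp (t • R) := by
    have hsmul : t • N = fromBlocks (t • P) (t • Q) 0 (t • R) := by simp [N, fromBlocks_smul]
    conv_lhs => rw [hsmul, exp_fromBlocks_zero₂₁, ← hsmul]
    simp [N, fromBlocks_multiply]
  have hF : HasDerivAt (fun s : ℝ => (exp (s • N)).toBlocks₁₂)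
      (P * (exp (t • N)).toBlocks₁₂ + Q * exp (t • R)) t :=
    hN ▸ π.hasFDerivAt.comp_hasDerivAt t (hasDerivAt_exp_smul_const' N t)
  exact ((hasDerivAt_exp_smul_const (-P) t).mul hF).congr_deriv (by noncomm_ring)

theorem of_intervalIntegral_exp_neg_mul_mul_exp (P Q R : Matrix m m ℝ) (h : ℝ) :
    of (fun i j => ∫ τ in (0 : ℝ)..h, (exp (τ • -P) * Q * exp (τ • R)) i j) =
      exp (h • -P) * (exp (h • fromBlocks P Q 0 R)).toBlocks₁₂ := by
  ext i j
  let e : Matrix m m ℝ →L[ℝ] ℝ := (entryLinearMap ℝ ℝ i j).toContinuousLinearMap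
  have hderiv (t : ℝ) : HasDerivAt
      (fun s : ℝ => (exp (s • -P) * (exp (s • fromBlocks P Q 0 R)).toBlocks₁₂) i j)
      ((exp (t • -P) * Q * exp (t • R)) i j) t :=
    e.hasFDerivAt.comp_hasDerivAt t (hasDerivAt_exp_neg_mul_toBlocks₁₂_exp P Q R t)
  have hcont : Continuous fun τ : ℝ => exp (τ • -P) * Q * exp (τ • R) := by fun_prop
  rw [of_apply, intervalIntegral.integral_eq_sub_of_hasDerivAt (fun t _ => hderiv t)
    ((hcont.matrix_elem i j).intervalIntegrable 0 h)]
  simp [toBlocks₁₂]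

end VanLoan

end Matrix

theorem stmt_8_general (n : ℕ) (A : Matrix (Fin n) (Fin n) ℝ)
    (C : Matrix (Fin 1) (Fin n) ℝ) (h : ℝ)
    (M : Matrix (Fin n ⊕ Fin n) (Fin n ⊕ Fin n) ℝ)
    (hM : M = Matrix.fromBlocks Aᵀ (Cᵀ * C) 0 (-A))
    (E : Matrix (Fin n ⊕ Fin n) (Fin n ⊕ Fin n) ℝ)
    (hE : E = NormedSpace.exp (h • M)) :
    E.toBlocks₂₁ = 0 ∧
    E.toBlocks₂₂ = NormedSpace.exp (h • (-A)) ∧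
    (E.toBlocks₂₂)ᵀ * E.toBlocks₁₂ =
      Matrix.of (fun i j : Fin n =>
        ∫ τ in (0:ℝ)..h,
          (NormedSpace.exp (τ • (-Aᵀ)) * (Cᵀ * C) *
            NormedSpace.exp (τ • (-A))) i j) := by
  have hsmul : h • M = fromBlocks (h • Aᵀ) (h • (Cᵀ * C)) 0 (h • -A) := by
    simp [hM, fromBlocks_smul]
  have hblocks := exp_fromBlocks_zero₂₁ (h • Aᵀ) (h • (Cᵀ * C)) (h • -A)
  rw [← hsmul, ← hE] at hblocks
  have h22 : E.toBlocks₂₂ = exp (h • -A) := by rw [hblocks, toBlocks_fromBlocks₂₂]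
  refine ⟨by rw [hblocks, toBlocks_fromBlocks₂₁], h22, ?_⟩
  rw [of_intervalIntegral_exp_neg_mul_mul_exp, ← hM, ← hE, h22, ← exp_transpose,
    transpose_smul, transpose_neg]

theorem stmt_8 (n : ℕ) (A : Matrix (Fin n) (Fin n) ℝ)
    (C : Matrix (Fin 1) (Fin n) ℝ) (h : ℝ) (hh : 0 < h)
    (M : Matrix (Fin n ⊕ Fin n) (Fin n ⊕ Fin n) ℝ)
    (hM : M = Matrix.fromBlocks Aᵀ (Cᵀ * C) 0 (-A))
    (E : Matrix (Fin n ⊕ Fin n) (Fin n ⊕ Fin n) ℝ)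
    (hE : E = NormedSpace.exp (h • M)) :
    E.toBlocks₂₁ = 0 ∧
    E.toBlocks₂₂ = NormedSpace.exp (h • (-A)) ∧
    (E.toBlocks₂₂)ᵀ * E.toBlocks₁₂ =
      Matrix.of (fun i j : Fin n =>
        ∫ τ in (0:ℝ)..h,
          (NormedSpace.exp (τ • (-Aᵀ)) * (Cᵀ * C) *
            NormedSpace.exp (τ • (-A))) i j) :=
  stmt_8_general n A C h M hM E hE
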